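/- Let n ≥ 1, let M be a nonnegative irreducible n×n real matrix, and fix indices ℓ, m and reals α > 0, 𝓛 ≥ 0 with α + 𝓛 = M_{ℓm}. Then for θ = ρ(M): the number ρ(M) is an eigenvalue of the modified matrix M_{ρ(M)} (i.e., det(M_{ρ(M)} − ρ(M)·I_{n+1}) = 0), and moreover ρ(M_{ρ(M)}) = ρ(M). -/

import Mathlib

/-- The spectral radius of a real square matrix: the supremum of the absolute values
of its complex eigenvalues. -/
noncomputable def specRad {n : ℕ} (A : Matrix (Fin n) (Fin n) ℝ) : ℝ :=
  sSup ((fun μ : ℂ => ‖μ‖) '' spectrum ℂ (A.map (fun x => (x : ℂ))))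

/-- The modified matrix `M_θ(α, 𝓛) ∈ ℝ^{(n+1)×(n+1)}`: rows and columns are indexed by
`{0, 1, …, n}` (index `i.succ` corresponding to the original index `i`), the entry
`(ℓ, m)` of `M` is replaced by `𝓛`, the entry `(0, m)` is `α`, the entry `(ℓ, 0)` is
`θ`, and all other entries involving the new index `0` are `0`. -/
def modMat {n : ℕ} (M : Matrix (Fin n) (Fin n) ℝ) (l m : Fin n) (α 𝓛 θ : ℝ) :
    Matrix (Fin (n + 1)) (Fin (n + 1)) ℝ :=
  Matrix.of fun i j =>
    if hi : i = 0 then (if j = m.succ then α else 0)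
    else if hj : j = 0 then (if i = l.succ then θ else 0)
    else if i = l.succ ∧ j = m.succ then 𝓛
    else M (i.pred hi) (j.pred hj)


/-!
Let `ρ = ρ(M)`. By Perron's theorem `ρ > 0` and `M w = ρ w` for some `w > 0`; we derive this from
Gelfand's formula: for an eigenvalue `μ` with `|μ| = ρ` and eigenvector `v`, the vector `|v|`
satisfies `ρ |v| ≤ M |v|`, and if this inequality were not an equality, applying the entrywise
positive matrix `∑_{k=1}^K M^k` would give a positive `y` with `M y ≥ s y` for some `s > ρ`,
hence `‖M^k‖ ≥ s^k`, contradicting `‖M^k‖^(1/k) → ρ`. Irreducibility then makes the eigenvector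
positive.

The vector `(α w_m / ρ, w)` is a positive eigenvector of `M_ρ` for `ρ`: row `0` gives `α w_m`,
and in row `ℓ` the new column contributes `ρ · α w_m / ρ = α w_m`, exactly what was moved out of
the entry `(ℓ, m)`. This gives the determinant; and a nonnegative matrix with a positive
eigenvector has its eigenvalue as spectral radius, by comparing any subinvariant vector
`|μ| u ≤ A u` with the positive eigenvector at the index maximising their ratio.
-/

open Matrix Filter Topology

namespace Matrix

variable {ι : Type*} [Fintype ι]

theorem mulVec_mono_of_nonneg {A : Matrix ι ι ℝ} (hA : ∀ i j, 0 ≤ A i j) {u v : ι → ℝ}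
    (huv : u ≤ v) : A *ᵥ u ≤ A *ᵥ v := fun i =>
  Finset.sum_le_sum fun j _ => mul_le_mul_of_nonneg_left (huv j) (hA i j)

theorem mulVec_apply_pos {A : Matrix ι ι ℝ} (hA : ∀ i j, 0 ≤ A i j) {v : ι → ℝ} (hv : 0 ≤ v)
    {i j : ι} (hij : 0 < A i j) (hj : 0 < v j) : 0 < (A *ᵥ v) i :=
  Finset.sum_pos' (fun k _ => mul_nonneg (hA i k) (hv k)) ⟨j, Finset.mem_univ j, mul_pos hij hj⟩

theorem le_of_smul_le_mulVec_of_mulVec_eq_smul {A : Matrix ι ι ℝ} (hA : ∀ i j, 0 ≤ A i j)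
    {u w : ι → ℝ} {c r : ℝ} (hu : 0 ≤ u) (hu0 : u ≠ 0) (hcu : c • u ≤ A *ᵥ u)
    (hw : ∀ i, 0 < w i) (hAw : A *ᵥ w = r • w) : c ≤ r := by
  obtain ⟨j, hj⟩ := (Pi.lt_def.1 (hu.lt_of_ne hu0.symm)).2
  obtain ⟨i, -, hi⟩ := Finset.univ.exists_max_image (fun i => u i / w i) ⟨j, Finset.mem_univ j⟩
  set t := u i / w i
  have hui : u i = t * w i := (div_mul_cancel₀ _ (hw i).ne').symm
  have hut : u ≤ t • w := fun k => by
    simpa [div_mul_cancel₀ _ (hw k).ne'] using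
      mul_le_mul_of_nonneg_right (hi k (Finset.mem_univ k)) (hw k).le
  have ht : 0 < t := (div_pos hj (hw j)).trans_le (hi j (Finset.mem_univ j))
  have key : c * u i ≤ r * u i :=
    calc c * u i ≤ (A *ᵥ u) i := hcu i
      _ ≤ (A *ᵥ (t • w)) i := mulVec_mono_of_nonneg hA hut i
      _ = r * u i := by simp [mulVec_smul, hAw, hui]; ring
  exact le_of_mul_le_mul_right key (hui ▸ mul_pos ht (hw i))

variable [DecidableEq ι]

theorem mem_spectrum_iff_exists_mulVec_eq_smul {K : Type*} [Field K]
    (B : Matrix ι ι K) (μ : K) : μ ∈ spectrum K B ↔ ∃ v ≠ 0, B *ᵥ v = μ • v := by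
  rw [← spectrum_toLin', ← Module.End.hasEigenvalue_iff_mem_spectrum,
    Module.End.hasEigenvalue_iff, Submodule.ne_bot_iff]
  simp [and_comm]

theorem ofReal_mem_spectrum_map {A : Matrix ι ι ℝ} {r : ℝ}
    (h : r ∈ spectrum ℝ A) : (r : ℂ) ∈ spectrum ℂ (A.map (fun x => (x : ℂ))) := by
  rw [mem_spectrum_iff_isRoot_charpoly] at h ⊢
  have hmap : A.map (fun x => (x : ℂ)) = A.map Complex.ofRealHom := rfl
  rw [hmap, charpoly_map]
  exact h.map

theorem exists_nonneg_smul_le_mulVec_of_mem_spectrum {A : Matrix ι ι ℝ}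
    (hA : ∀ i j, 0 ≤ A i j) {μ : ℂ} (hμ : μ ∈ spectrum ℂ (A.map (fun x => (x : ℂ)))) :
    ∃ u, 0 ≤ u ∧ u ≠ 0 ∧ ‖μ‖ • u ≤ A *ᵥ u := by
  obtain ⟨v, hv0, hv⟩ := (mem_spectrum_iff_exists_mulVec_eq_smul _ μ).1 hμ
  refine ⟨fun i => ‖v i‖, fun i => norm_nonneg _, fun h => hv0 (funext fun i => ?_), fun i => ?_⟩
  · simpa using congrFun h i
  · calc ‖μ‖ * ‖v i‖ = ‖∑ j, (A i j : ℂ) * v j‖ := by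
          rw [← norm_mul, ← smul_eq_mul, ← Pi.smul_apply, ← hv]; rfl
      _ ≤ ∑ j, A i j * ‖v j‖ := (norm_sum_le _ _).trans_eq <| Finset.sum_congr rfl fun j _ => by
          rw [norm_mul, Complex.norm_real, Real.norm_of_nonneg (hA i j)]

theorem pow_mulVec_eq_pow_smul {A : Matrix ι ι ℝ} {w : ι → ℝ} {r : ℝ} (h : A *ᵥ w = r • w)
    (k : ℕ) : (A ^ k) *ᵥ w = r ^ k • w := by
  induction k with
  | zero => simp
  | succ k ih => rw [pow_succ', ← mulVec_mulVec, ih, mulVec_smul, h, smul_smul, pow_succ]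

theorem pow_smul_le_pow_mulVec {A : Matrix ι ι ℝ} (hA : ∀ i j, 0 ≤ A i j) {y : ι → ℝ} {s : ℝ}
    (hs : 0 ≤ s) (h : s • y ≤ A *ᵥ y) (k : ℕ) : s ^ k • y ≤ (A ^ k) *ᵥ y := by
  induction k with
  | zero => simp
  | succ k ih =>
    calc s ^ (k + 1) • y = s • s ^ k • y := by rw [smul_smul, pow_succ']
      _ ≤ s • ((A ^ k) *ᵥ y) := smul_le_smul_of_nonneg_left ih hs
      _ = (A ^ k) *ᵥ (s • y) := (mulVec_smul _ _ _).symm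
      _ ≤ (A ^ k) *ᵥ (A *ᵥ y) := mulVec_mono_of_nonneg (pow_apply_nonneg hA k) h
      _ = (A ^ (k + 1)) *ᵥ y := by rw [mulVec_mulVec, pow_succ]

theorem exists_sum_pow_pos {A : Matrix ι ι ℝ} (hA : ∀ i j, 0 ≤ A i j)
    (hirr : ∀ i j, ∃ k, 1 ≤ k ∧ 0 < (A ^ k) i j) :
    ∃ K, ∀ i j, 0 < (∑ k ∈ Finset.Icc 1 K, A ^ k) i j := by
  choose k hk1 hk using hirr
  set K := Finset.univ.sup fun p : ι × ι => k p.1 p.2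
  refine ⟨K, fun i j => ?_⟩
  have hkK : k i j ∈ Finset.Icc 1 K := Finset.mem_Icc.2
    ⟨hk1 i j, Finset.le_sup (f := fun p : ι × ι => k p.1 p.2) (Finset.mem_univ (i, j))⟩
  rw [sum_apply]
  exact Finset.sum_pos' (fun k _ => pow_apply_nonneg hA k i j) ⟨k i j, hkK, hk i j⟩

theorem pos_of_mulVec_eq_smul {A : Matrix ι ι ℝ} (hA : ∀ i j, 0 ≤ A i j)
    (hirr : ∀ i j, ∃ k, 1 ≤ k ∧ 0 < (A ^ k) i j) {w : ι → ℝ} (hw : 0 ≤ w) (hw0 : w ≠ 0)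
    {r : ℝ} (h : A *ᵥ w = r • w) : 0 < r ∧ ∀ i, 0 < w i := by
  obtain ⟨j, hj⟩ := (Pi.lt_def.1 (hw.lt_of_ne hw0.symm)).2
  have hpow (i : ι) : ∃ k, 1 ≤ k ∧ 0 < r ^ k * w i := by
    obtain ⟨k, hk1, hk⟩ := hirr i j
    refine ⟨k, hk1, ?_⟩
    simpa [pow_mulVec_eq_pow_smul h k] using mulVec_apply_pos (pow_apply_nonneg hA k) hw hk hj
  have hr : 0 ≤ r := by
    have hAw : 0 ≤ (A *ᵥ w) j := Finset.sum_nonneg fun k _ => mul_nonneg (hA j k) (hw k)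
    rw [h, Pi.smul_apply, smul_eq_mul] at hAw
    exact nonneg_of_mul_nonneg_left hAw hj
  obtain ⟨k, hk1, hk⟩ := hpow j
  refine ⟨hr.lt_of_ne fun hr0 => ?_, fun i => ?_⟩
  · rw [← hr0, zero_pow (by omega), zero_mul] at hk
    exact hk.false
  · obtain ⟨k, -, hk⟩ := hpow i
    exact pos_of_mul_pos_right hk (pow_nonneg hr k)

end Matrix

theorem exists_gt_forall_mul_lt {ι : Type*} [Finite ι] {r : ℝ} {x y : ι → ℝ}
    (h : ∀ i, r * y i < x i) : ∃ s > r, ∀ i, s * y i < x i := by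
  have hev : ∀ᶠ s in 𝓝 r, ∀ i, s * y i < x i := eventually_all.2 fun i =>
    (continuous_mul_const (y i)).continuousAt.eventually_lt continuousAt_const (h i)
  obtain ⟨s, hs, hsr⟩ := ((hev.filter_mono nhdsWithin_le_nhds).and self_mem_nhdsWithin).exists
    (f := 𝓝[>] r)
  exact ⟨s, hsr, hs⟩

theorem ofReal_le_spectralRadius_of_pow_le_norm_pow {A : Type*} [NormedRing A]
    [NormedAlgebra ℂ A] [CompleteSpace A] (a : A) {s : ℝ} (hs : 0 ≤ s)
    (h : ∀ k, s ^ k ≤ ‖a ^ k‖) : ENNReal.ofReal s ≤ spectralRadius ℂ a := by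
  refine ge_of_tendsto (spectrum.pow_norm_pow_one_div_tendsto_nhds_spectralRadius a) ?_
  filter_upwards [eventually_ne_atTop 0] with k hk
  refine ENNReal.ofReal_le_ofReal ?_
  calc s = (s ^ k) ^ (1 / k : ℝ) := by rw [one_div, Real.pow_rpow_inv_natCast hs hk]
    _ ≤ ‖a ^ k‖ ^ (1 / k : ℝ) := by gcongr; exact h k

theorem norm_le_specRad {n : ℕ} {A : Matrix (Fin n) (Fin n) ℝ} {μ : ℂ}
    (hμ : μ ∈ spectrum ℂ (A.map (fun x => (x : ℂ)))) : ‖μ‖ ≤ specRad A :=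
  le_csSup ((finite_spectrum _).image _).bddAbove ⟨μ, hμ, rfl⟩

theorem exists_norm_eq_specRad {n : ℕ} [NeZero n] (A : Matrix (Fin n) (Fin n) ℝ) :
    ∃ μ ∈ spectrum ℂ (A.map (fun x => (x : ℂ))), ‖μ‖ = specRad A :=
  ((spectrum.nonempty_of_isAlgClosed_of_finiteDimensional ℂ _).image _).csSup_mem
    ((finite_spectrum _).image _)

theorem specRad_nonneg {n : ℕ} (A : Matrix (Fin n) (Fin n) ℝ) : 0 ≤ specRad A :=
  Real.sSup_nonneg <| by rintro _ ⟨μ, -, rfl⟩; exact norm_nonneg μ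

theorem spectralRadius_le_ofReal_specRad {n : ℕ} (A : Matrix (Fin n) (Fin n) ℝ) :
    spectralRadius ℂ (A.map (fun x => (x : ℂ))) ≤ ENNReal.ofReal (specRad A) :=
  iSup₂_le fun μ hμ => by
    rw [← enorm_eq_nnnorm, ← ofReal_norm]
    exact ENNReal.ofReal_le_ofReal (norm_le_specRad hμ)

section LinftyOpNorm

attribute [local instance] Matrix.linftyOpNormedAddCommGroup Matrix.linftyOpNormedRing
  Matrix.linftyOpNormedAlgebra

variable {ι : Type*} [Fintype ι]

theorem Matrix.linfty_opNorm_map_ofReal (A : Matrix ι ι ℝ) :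
    ‖A.map (fun x => (x : ℂ))‖ = ‖A‖ := by
  simp [linfty_opNorm_def]

theorem Matrix.le_linfty_opNorm_of_smul_le_mulVec {A : Matrix ι ι ℝ} {y : ι → ℝ} {c : ℝ}
    (hy : 0 ≤ y) (hy0 : y ≠ 0) (hc : 0 ≤ c) (h : c • y ≤ A *ᵥ y) : c ≤ ‖A‖ := by
  have hcy : ‖c • y‖ ≤ ‖A *ᵥ y‖ := (pi_norm_le_iff_of_nonneg (norm_nonneg _)).2 fun i => by
    rw [Pi.smul_apply, smul_eq_mul, Real.norm_of_nonneg (mul_nonneg hc (hy i))]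
    exact (h i).trans ((le_abs_self _).trans (norm_le_pi_norm (A *ᵥ y) i))
  rw [norm_smul, Real.norm_of_nonneg hc] at hcy
  exact le_of_mul_le_mul_right (hcy.trans (linfty_opNorm_mulVec A y)) (norm_pos_iff.2 hy0)

theorem le_specRad_of_smul_le_mulVec {n : ℕ} {A : Matrix (Fin n) (Fin n) ℝ}
    (hA : ∀ i j, 0 ≤ A i j) {y : Fin n → ℝ} (hy : 0 ≤ y) (hy0 : y ≠ 0) {s : ℝ} (hs : 0 ≤ s)
    (h : s • y ≤ A *ᵥ y) : s ≤ specRad A := by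
  have hpow (k : ℕ) : s ^ k ≤ ‖(A.map (fun x => (x : ℂ))) ^ k‖ := by
    have hmap : (A.map (fun x => (x : ℂ))) ^ k = (A ^ k).map (fun x => (x : ℂ)) :=
      (Matrix.map_pow A Complex.ofRealHom k).symm
    rw [hmap, linfty_opNorm_map_ofReal]
    exact le_linfty_opNorm_of_smul_le_mulVec hy hy0 (pow_nonneg hs k)
      (pow_smul_le_pow_mulVec hA hs h k)
  rw [← ENNReal.ofReal_le_ofReal_iff (specRad_nonneg A)]
  exact (ofReal_le_spectralRadius_of_pow_le_norm_pow _ hs hpow).trans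
    (spectralRadius_le_ofReal_specRad A)

end LinftyOpNorm

theorem mulVec_eq_specRad_smul_of_specRad_smul_le_mulVec {n : ℕ} {A : Matrix (Fin n) (Fin n) ℝ}
    (hA : ∀ i j, 0 ≤ A i j) (hirr : ∀ i j, ∃ k, 1 ≤ k ∧ 0 < (A ^ k) i j) {w : Fin n → ℝ}
    (hw : 0 ≤ w) (hw0 : w ≠ 0) (h : specRad A • w ≤ A *ᵥ w) : A *ᵥ w = specRad A • w := by
  set ρ := specRad A
  by_contra hne
  obtain ⟨K, hK⟩ := exists_sum_pow_pos hA hirr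
  set Q := ∑ k ∈ Finset.Icc 1 K, A ^ k
  have hQ : ∀ i j, 0 ≤ Q i j := fun i j => (hK i j).le
  obtain ⟨j, hj⟩ := (Pi.lt_def.1 (hw.lt_of_ne hw0.symm)).2
  obtain ⟨j', hj'⟩ := (Pi.lt_def.1 ((sub_nonneg.2 h).lt_of_ne (sub_ne_zero.2 hne).symm)).2
  set y := Q *ᵥ w
  have hy : ∀ i, 0 < y i := fun i => mulVec_apply_pos hQ hw (hK i j) hj
  have hcomm : A * Q = Q * A :=
    Commute.sum_right _ _ _ fun k _ => (Commute.refl A).pow_right k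
  have hAy : A *ᵥ y - ρ • y = Q *ᵥ (A *ᵥ w - ρ • w) := by
    simp only [y, mulVec_sub, mulVec_smul, mulVec_mulVec, hcomm]
  have hgap (i : Fin n) : ρ * y i < (A *ᵥ y) i := by
    have := mulVec_apply_pos hQ (sub_nonneg.2 h) (hK i j') hj'
    rw [← hAy] at this
    simpa [sub_pos] using this
  obtain ⟨s, hρs, hs⟩ := exists_gt_forall_mul_lt hgap
  have := le_specRad_of_smul_le_mulVec hA (fun i => (hy i).le)
    (fun h0 => (hy j).ne' (congrFun h0 j)) ((specRad_nonneg A).trans hρs.le) fun i => (hs i).le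
  exact this.not_gt hρs

theorem specRad_pos_and_exists_pos_mulVec_eq_smul {n : ℕ} [NeZero n]
    {A : Matrix (Fin n) (Fin n) ℝ} (hA : ∀ i j, 0 ≤ A i j)
    (hirr : ∀ i j, ∃ k, 1 ≤ k ∧ 0 < (A ^ k) i j) :
    0 < specRad A ∧ ∃ w, (∀ i, 0 < w i) ∧ A *ᵥ w = specRad A • w := by
  obtain ⟨μ, hμ, hμρ⟩ := exists_norm_eq_specRad A
  obtain ⟨w, hw, hw0, hsub⟩ := exists_nonneg_smul_le_mulVec_of_mem_spectrum hA hμ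
  rw [hμρ] at hsub
  have heig := mulVec_eq_specRad_smul_of_specRad_smul_le_mulVec hA hirr hw hw0 hsub
  obtain ⟨hρ, hwpos⟩ := pos_of_mulVec_eq_smul hA hirr hw hw0 heig
  exact ⟨hρ, w, hwpos, heig⟩

theorem specRad_eq_of_mulVec_eq_smul {n : ℕ} [NeZero n] {A : Matrix (Fin n) (Fin n) ℝ}
    (hA : ∀ i j, 0 ≤ A i j) {w : Fin n → ℝ} (hw : ∀ i, 0 < w i) {r : ℝ}
    (h : A *ᵥ w = r • w) : specRad A = r := by
  have hr : (r : ℂ) ∈ spectrum ℂ (A.map (fun x => (x : ℂ))) :=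
    ofReal_mem_spectrum_map <| (mem_spectrum_iff_exists_mulVec_eq_smul A r).2
      ⟨w, fun h0 => (hw 0).ne' (congrFun h0 0), h⟩
  have hle : ∀ μ ∈ spectrum ℂ (A.map (fun x => (x : ℂ))), ‖μ‖ ≤ r := fun μ hμ => by
    obtain ⟨u, hu, hu0, hsub⟩ := exists_nonneg_smul_le_mulVec_of_mem_spectrum hA hμ
    exact le_of_smul_le_mulVec_of_mulVec_eq_smul hA hu hu0 hsub hw h
  have hr0 : 0 ≤ r := (norm_nonneg _).trans (hle r hr)
  refine IsGreatest.csSup_eq ⟨⟨r, hr, by simp [abs_of_nonneg hr0]⟩, ?_⟩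
  rintro _ ⟨μ, hμ, rfl⟩
  exact hle μ hμ

section modMat

variable {n : ℕ} (M : Matrix (Fin n) (Fin n) ℝ) (l m : Fin n) (α 𝓛 θ : ℝ)

@[simp] theorem modMat_zero_zero : modMat M l m α 𝓛 θ 0 0 = 0 := by
  simp [modMat, (Fin.succ_ne_zero m).symm]

@[simp] theorem modMat_zero_succ (j : Fin n) :
    modMat M l m α 𝓛 θ 0 j.succ = if j = m then α else 0 := by
  simp [modMat, Fin.succ_inj]

@[simp] theorem modMat_succ_zero (i : Fin n) :
    modMat M l m α 𝓛 θ i.succ 0 = if i = l then θ else 0 := by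
  simp [modMat, Fin.succ_ne_zero, Fin.succ_inj]

@[simp] theorem modMat_succ_succ (i j : Fin n) :
    modMat M l m α 𝓛 θ i.succ j.succ = if i = l ∧ j = m then 𝓛 else M i j := by
  simp [modMat, Fin.succ_ne_zero, Fin.succ_inj, Fin.pred_succ]

variable {M α 𝓛 θ}

theorem modMat_nonneg (hM : ∀ i j, 0 ≤ M i j) (hα : 0 ≤ α) (h𝓛 : 0 ≤ 𝓛) (hθ : 0 ≤ θ) :
    ∀ i j, 0 ≤ modMat M l m α 𝓛 θ i j := by
  intro i j
  simp only [modMat, of_apply]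
  split_ifs <;> first | assumption | exact le_rfl | exact hM _ _

theorem modMat_mulVec_cons (hsum : α + 𝓛 = M l m) (x : ℝ) (w : Fin n → ℝ) :
    modMat M l m α 𝓛 θ *ᵥ Fin.cons x w =
      Fin.cons (α * w m) (M *ᵥ w + Pi.single l (θ * x - α * w m)) := by
  ext i
  induction i using Fin.cases with
  | zero => simp [mulVec, dotProduct, Fin.sum_univ_succ]
  | succ i =>
    simp only [mulVec, dotProduct, Fin.sum_univ_succ, modMat_succ_zero, modMat_succ_succ,
      Fin.cons_zero, Fin.cons_succ, Pi.add_apply]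
    by_cases hi : i = l
    · subst hi
      have hrow (j : Fin n) : (if j = m then 𝓛 else M i j) * w j =
          M i j * w j + if j = m then (𝓛 - M i m) * w m else 0 := by
        split_ifs with hj
        · subst hj; ring
        · ring
      simp only [true_and, if_true, hrow, Finset.sum_add_distrib, Finset.sum_ite_eq',
        Finset.mem_univ, Pi.single_eq_same]
      linear_combination (w m) * hsum
    · simp [hi]

theorem modMat_mulVec_cons_eq_smul (hsum : α + 𝓛 = M l m) {w : Fin n → ℝ} {r x : ℝ}
    (hw : M *ᵥ w = r • w) (hx : r * x = α * w m) :
    modMat M l m α 𝓛 r *ᵥ Fin.cons x w = r • Fin.cons x w := by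
  rw [modMat_mulVec_cons l m hsum, hw, ← hx, sub_self, Pi.single_zero, add_zero]
  exact (smul_cons r x w).symm

end modMat

theorem specRad_modMat_at_specRad_general
    {n : ℕ} (M : Matrix (Fin n) (Fin n) ℝ)
    (hM0 : ∀ i j, 0 ≤ M i j)
    (hirr : ∀ i j, ∃ k, 1 ≤ k ∧ 0 < (M ^ k) i j)
    (l m : Fin n) (α 𝓛 : ℝ) (hα : 0 < α) (h𝓛 : 0 ≤ 𝓛) (hsum : α + 𝓛 = M l m) :
    (modMat M l m α 𝓛 (specRad M) -
        specRad M • (1 : Matrix (Fin (n + 1)) (Fin (n + 1)) ℝ)).det = 0 ∧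
      specRad (modMat M l m α 𝓛 (specRad M)) = specRad M := by
  have : NeZero n := ⟨l.pos.ne'⟩
  obtain ⟨hρ, w, hw, hMw⟩ := specRad_pos_and_exists_pos_mulVec_eq_smul hM0 hirr
  set ρ := specRad M
  set w' : Fin (n + 1) → ℝ := Fin.cons (α * w m / ρ) w
  have hw' : ∀ i, 0 < w' i := fun i => Fin.cases (div_pos (mul_pos hα (hw m)) hρ) hw i
  have hNw : modMat M l m α 𝓛 ρ *ᵥ w' = ρ • w' :=
    modMat_mulVec_cons_eq_smul l m hsum hMw (mul_div_cancel₀ _ hρ.ne')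
  refine ⟨?_, specRad_eq_of_mulVec_eq_smul (modMat_nonneg l m hM0 hα.le h𝓛 hρ.le) hw' hNw⟩
  refine exists_mulVec_eq_zero_iff.1 ⟨w', fun h => (hw' 0).ne' (congrFun h 0), ?_⟩
  rw [sub_mulVec, smul_mulVec, one_mulVec, hNw, sub_self]

/-- For a nonnegative irreducible `M` and `θ = ρ(M)`: `ρ(M)` is an eigenvalue of the
modified matrix `M_{ρ(M)}`, and `ρ(M_{ρ(M)}) = ρ(M)`. -/
theorem specRad_modMat_at_specRad
    {n : ℕ} (hn : 1 ≤ n) (M : Matrix (Fin n) (Fin n) ℝ)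
    (hM0 : ∀ i j, 0 ≤ M i j)
    (hirr : ∀ i j, ∃ k, 1 ≤ k ∧ 0 < (M ^ k) i j)
    (l m : Fin n) (α 𝓛 : ℝ) (hα : 0 < α) (h𝓛 : 0 ≤ 𝓛) (hsum : α + 𝓛 = M l m) :
    (modMat M l m α 𝓛 (specRad M) -
        specRad M • (1 : Matrix (Fin (n + 1)) (Fin (n + 1)) ℝ)).det = 0 ∧
      specRad (modMat M l m α 𝓛 (specRad M)) = specRad M :=
  specRad_modMat_at_specRad_general M hM0 hirr l m α 𝓛 hα h𝓛 hsum
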